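/- arXiv:2009.14546 — 4 statements merged into one kernel-verified Lean document; each statement's English description precedes it below -/
import Mathlib

section
/- For every p ∈ ℝ one has sup_{a∈ℝ} ( p·a − 𝒞(a) ) = 2(cosh p − 1), and conversely for every a ∈ ℝ one has 𝒞(a) = sup_{p∈ℝ} ( a·p − 2(cosh p − 1) ). -/
/-!
With `q = arsinh (a/2)`, i.e. `a = 2 sinh q`, the integral evaluates to
`𝒞(a) = 2 (q sinh q - cosh q + 1)`. Fenchel–Young `p a ≤ 𝒞(a) + 2 (cosh p - 1)` is then the
tangent-line inequality `cosh q + (p - q) sinh q ≤ cosh p` for the convex function `cosh`, with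
equality at `q = p`. So `a = 2 sinh p` attains the first supremum and `p = arsinh (a/2)` the second.
-/

/-- `𝒞(a) := ∫₀ᵃ arcsinh(t/2) dt`. -/
noncomputable def Ccost (a : ℝ) : ℝ := ∫ t in (0:ℝ)..a, Real.arsinh (t / 2)

open Real

theorem ciSup_eq_of_forall_le_of_eq {ι α : Type*} [ConditionallyCompleteLattice α] {f : ι → α}
    {c : α} (hle : ∀ i, f i ≤ c) (i₀ : ι) (hi₀ : f i₀ = c) : ⨆ i, f i = c :=
  IsGreatest.csSup_eq ⟨⟨i₀, hi₀⟩, Set.forall_mem_range.2 hle⟩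

theorem exp_add_mul_exp_le_exp (p q : ℝ) : exp q + (p - q) * exp q ≤ exp p := by
  calc exp q + (p - q) * exp q = exp q * (p - q + 1) := by ring
    _ ≤ exp q * exp (p - q) := by gcongr; exact add_one_le_exp _
    _ = exp p := by rw [← exp_add]; ring_nf

theorem cosh_add_mul_sinh_le_cosh (p q : ℝ) : cosh q + (p - q) * sinh q ≤ cosh p := by
  have hpos := exp_add_mul_exp_le_exp p q
  have hneg := exp_add_mul_exp_le_exp (-p) (-q)
  rw [cosh_eq, cosh_eq, sinh_eq]
  linarith

theorem hasDerivAt_mul_arsinh_half_sub_two_mul_cosh_arsinh_half (t : ℝ) :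
    HasDerivAt (fun t ↦ t * arsinh (t / 2) - 2 * cosh (arsinh (t / 2))) (arsinh (t / 2)) t := by
  have hhalf : HasDerivAt (fun t : ℝ ↦ t / 2) (1 / 2) t := (hasDerivAt_id t).div_const 2
  have harsinh := (hasDerivAt_arsinh (t / 2)).comp t hhalf
  have hcosh := (hasDerivAt_cosh (arsinh (t / 2))).comp t harsinh
  refine (((hasDerivAt_id t).mul harsinh).sub (hcosh.const_mul 2)).congr_deriv ?_
  simp only [Function.comp_apply, id, sinh_arsinh]
  ring

theorem Ccost_eq (a : ℝ) : Ccost a = a * arsinh (a / 2) - 2 * (cosh (arsinh (a / 2)) - 1) := by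
  have hcont : Continuous fun t : ℝ ↦ arsinh (t / 2) := continuous_arsinh.comp (by fun_prop)
  rw [Ccost, intervalIntegral.integral_eq_sub_of_hasDerivAt
    (fun t _ ↦ hasDerivAt_mul_arsinh_half_sub_two_mul_cosh_arsinh_half t)
    (hcont.intervalIntegrable 0 a)]
  simp only [zero_div, arsinh_zero, cosh_zero]
  ring

theorem Ccost_two_mul_sinh (q : ℝ) : Ccost (2 * sinh q) = 2 * (q * sinh q - (cosh q - 1)) := by
  rw [Ccost_eq, mul_div_cancel_left₀ _ two_ne_zero, arsinh_sinh]
  ring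

theorem mul_le_Ccost_add_two_mul_cosh_sub_one (p a : ℝ) :
    p * a ≤ Ccost a + 2 * (cosh p - 1) := by
  obtain ⟨q, rfl⟩ : ∃ q, a = 2 * sinh q := ⟨arsinh (a / 2), by rw [sinh_arsinh]; ring⟩
  rw [Ccost_two_mul_sinh]
  linarith [cosh_add_mul_sinh_le_cosh p q]

theorem mul_two_mul_sinh_eq_Ccost_add (p : ℝ) :
    p * (2 * sinh p) = Ccost (2 * sinh p) + 2 * (cosh p - 1) := by
  rw [Ccost_two_mul_sinh]
  ring

/-- The Legendre dual of `𝒞` is `p ↦ 2(cosh p − 1)`, and conversely `𝒞` is the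
Legendre dual of `p ↦ 2(cosh p − 1)`. -/
theorem Ccost_legendre_dual :
    (∀ p : ℝ, (⨆ a : ℝ, (p * a - Ccost a)) = 2 * (Real.cosh p - 1)) ∧
    (∀ a : ℝ, Ccost a = ⨆ p : ℝ, (a * p - 2 * (Real.cosh p - 1))) := by
  refine ⟨fun p ↦ ?_, fun a ↦ ?_⟩
  · refine ciSup_eq_of_forall_le_of_eq (fun a ↦ ?_) (2 * sinh p) ?_
    · linarith [mul_le_Ccost_add_two_mul_cosh_sub_one p a]
    · linarith [mul_two_mul_sinh_eq_Ccost_add p]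
  · refine (ciSup_eq_of_forall_le_of_eq (fun p ↦ ?_) (arsinh (a / 2)) ?_).symm
    · linarith [mul_le_Ccost_add_two_mul_cosh_sub_one p a, mul_comm a p]
    · rw [Ccost_eq]
end

section
/- Let T > 0 and let u and j be finite nonnegative Borel measures on [0,T]. Then sup_{ζ ∈ C([0,T])} ( ∫_{[0,T]} ζ(t) j(dt) − ∫_{[0,T]} (e^{ζ(t)} − 1) u(dt) ) equals ∫_{[0,T]} s( (dj/du)(t) ∣ 1 ) u(dt) if j is absolutely continuous with respect to u (dj/du denoting the Radon–Nikodym derivative), and equals +∞ otherwise. -/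
/-!
Writing `∫ ζ dj = ∫ ζ (dj/du) du` when `j ≪ u`, the Fenchel–Young inequality
`x p - (eˣ - 1) ≤ s(p∣1)` (tangent line of `exp` at `log p`) bounds the functional by the entropy.
Conversely, the bounded test functions `log (clip c (dj/du))`, where `clip c` truncates to
`[c⁻¹, c]`, give at least the entropy of the truncated density; they are approximated in
`L¹(u + j)` by continuous functions, on which the functional is Lipschitz for uniformly bounded
arguments, and Fatou's lemma lets `c → ∞`. If `j` is not absolutely continuous, there is a closed
`F` with `u F = 0 < j F`; `M` times an Urysohn function for `F` inside an open `U ⊇ F` with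
`u U ≤ e^{-M}` gives the functional a value at least `M j(F) - 1`.
-/

open MeasureTheory Set
open scoped ENNReal

/-- The Boltzmann cost with reference value 1: `s(p∣1) = p·log p − p + 1`. -/
noncomputable def sOne (p : ℝ) : ℝ := p * Real.log p - p + 1

open Filter Topology Real

theorem continuous_sOne : Continuous sOne := by
  have := continuous_mul_log
  unfold sOne
  fun_prop

theorem Real.exp_sub_exp_le_exp_mul_sub (a b : ℝ) : exp a - exp b ≤ exp a * (a - b) := by
  have h := mul_le_mul_of_nonneg_left (add_one_le_exp (b - a)) (exp_pos a).le
  rw [← exp_add, add_sub_cancel] at h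
  linarith

theorem mul_sub_exp_sub_one_le_sOne (x : ℝ) {p : ℝ} (hp : 0 ≤ p) :
    x * p - (exp x - 1) ≤ sOne p := by
  rcases hp.eq_or_lt with rfl | hp
  · simp [sOne, (exp_pos x).le]
  · have h := exp_sub_exp_le_exp_mul_sub (log p) x
    rw [exp_log hp] at h
    unfold sOne
    linarith

theorem sOne_nonneg {p : ℝ} (hp : 0 ≤ p) : 0 ≤ sOne p := by
  simpa using mul_sub_exp_sub_one_le_sOne 0 hp

noncomputable def clip (c p : ℝ) : ℝ := max c⁻¹ (min c p)

theorem continuous_clip (c : ℝ) : Continuous (clip c) := by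
  unfold clip
  fun_prop

theorem clip_pos {c : ℝ} (hc : 0 < c) (p : ℝ) : 0 < clip c p :=
  (inv_pos.2 hc).trans_le (le_max_left _ _)

theorem abs_log_clip_le {c : ℝ} (hc : 1 ≤ c) (p : ℝ) : |log (clip c p)| ≤ log c := by
  have hq := clip_pos (one_pos.trans_le hc) p
  rw [abs_le, ← log_inv]
  exact ⟨log_le_log (by positivity) (le_max_left _ _),
    log_le_log hq (max_le ((inv_le_one_of_one_le₀ hc).trans hc) (min_le_left _ _))⟩

theorem sOne_clip_le {c : ℝ} (hc : 1 ≤ c) (p : ℝ) :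
    sOne (clip c p) ≤ log (clip c p) * p - (clip c p - 1) := by
  suffices (clip c p - p) * log (clip c p) ≤ 0 by unfold sOne; linarith
  -- clipping moves `p` towards `1`, so the two factors have opposite signs
  rcases le_total p c⁻¹ with hp | hp
  · rw [clip, max_eq_left ((min_le_right _ _).trans hp), log_inv]
    exact mul_nonpos_of_nonneg_of_nonpos (sub_nonneg.2 hp) (neg_nonpos.2 (log_nonneg hc))
  rcases le_total p c with hpc | hpc
  · simp [clip, min_eq_right hpc, max_eq_right hp]
  · rw [clip, min_eq_left hpc, max_eq_right ((inv_le_one_of_one_le₀ hc).trans hc)]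
    exact mul_nonpos_of_nonpos_of_nonneg (sub_nonpos.2 hpc) (log_nonneg hc)

theorem tendsto_clip {p : ℝ} (hp : 0 ≤ p) : Tendsto (fun c => clip c p) atTop (𝓝 p) := by
  have h : Tendsto (fun c : ℝ => max c⁻¹ p) atTop (𝓝 p) := by
    simpa [max_eq_right hp] using tendsto_inv_atTop_zero.max (tendsto_const_nhds (x := p))
  refine h.congr' ?_
  filter_upwards [eventually_ge_atTop p] with c hc
  simp [clip, min_eq_right hc]

section DualFunctional

variable {α : Type*} [MeasurableSpace α] {u j : Measure α}

noncomputable def dualFunctional (u j : Measure α) (ζ : α → ℝ) : ℝ :=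
  ∫ t, ζ t ∂j - ∫ t, (exp (ζ t) - 1) ∂u

noncomputable def entropyCost (u j : Measure α) : ℝ≥0∞ :=
  ∫⁻ t, ENNReal.ofReal (sOne ((j.rnDeriv u t).toReal)) ∂u

theorem measurable_clip_rnDeriv (c : ℝ) : Measurable fun t => clip c (j.rnDeriv u t).toReal :=
  (continuous_clip c).measurable.comp (Measure.measurable_rnDeriv j u).ennreal_toReal

theorem ofReal_integral_le_lintegral_ofReal {μ : Measure α} {f : α → ℝ} (hf : Integrable f μ) :
    ENNReal.ofReal (∫ t, f t ∂μ) ≤ ∫⁻ t, ENNReal.ofReal (f t) ∂μ :=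
  calc ENNReal.ofReal (∫ t, f t ∂μ) ≤ ENNReal.ofReal (∫ t, max (f t) 0 ∂μ) :=
        ENNReal.ofReal_le_ofReal (integral_mono hf hf.pos_part fun t => le_max_left _ _)
    _ = ∫⁻ t, ENNReal.ofReal (f t) ∂μ := by
        rw [ofReal_integral_eq_lintegral_ofReal hf.pos_part (.of_forall fun t => le_max_right _ _)]
        simp

theorem integrable_exp_sub_one {μ : Measure α} [IsFiniteMeasure μ] {ζ : α → ℝ}
    (hζ : Measurable ζ) {B : ℝ} (hB : ∀ t, ζ t ≤ B) :
    Integrable (fun t => exp (ζ t) - 1) μ := by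
  refine (Integrable.of_bound (measurable_exp.comp hζ).aestronglyMeasurable (exp B)
    (.of_forall fun t => ?_)).sub (integrable_const 1)
  rw [Function.comp_apply, norm_of_nonneg (exp_pos _).le]
  exact exp_le_exp.2 (hB t)

theorem integrable_mul_rnDeriv [IsFiniteMeasure j] {ζ : α → ℝ} (hζ : Measurable ζ) {B : ℝ}
    (hB : ∀ t, |ζ t| ≤ B) : Integrable (fun t => ζ t * (j.rnDeriv u t).toReal) u :=
  Measure.integrable_toReal_rnDeriv.bdd_mul hζ.aestronglyMeasurable (.of_forall hB)

theorem integrable_mul_rnDeriv_sub_exp_sub_one [IsFiniteMeasure u] [IsFiniteMeasure j]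
    {ζ : α → ℝ} (hζ : Measurable ζ) {B : ℝ} (hB : ∀ t, |ζ t| ≤ B) :
    Integrable (fun t => ζ t * (j.rnDeriv u t).toReal - (exp (ζ t) - 1)) u :=
  (integrable_mul_rnDeriv hζ hB).sub (integrable_exp_sub_one hζ fun t => (abs_le.1 (hB t)).2)

theorem dualFunctional_eq_integral_rnDeriv [IsFiniteMeasure u] [IsFiniteMeasure j] (hac : j ≪ u)
    {ζ : α → ℝ} (hζ : Measurable ζ) {B : ℝ} (hB : ∀ t, |ζ t| ≤ B) :
    dualFunctional u j ζ = ∫ t, (ζ t * (j.rnDeriv u t).toReal - (exp (ζ t) - 1)) ∂u := by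
  rw [integral_sub (integrable_mul_rnDeriv hζ hB)
    (integrable_exp_sub_one hζ fun t => (abs_le.1 (hB t)).2), dualFunctional,
    ← integral_rnDeriv_smul hac]
  simp_rw [smul_eq_mul, mul_comm]

theorem dualFunctional_le_entropyCost [IsFiniteMeasure u] [IsFiniteMeasure j] (hac : j ≪ u)
    {ζ : α → ℝ} (hζ : Measurable ζ) {B : ℝ} (hB : ∀ t, |ζ t| ≤ B) :
    (dualFunctional u j ζ : EReal) ≤ entropyCost u j := by
  rw [dualFunctional_eq_integral_rnDeriv hac hζ hB]
  refine (EReal.coe_le_coe_iff.2 (le_max_left _ 0)).trans ?_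
  rw [← EReal.coe_ennreal_ofReal, EReal.coe_ennreal_le_coe_ennreal_iff]
  refine (ofReal_integral_le_lintegral_ofReal (integrable_mul_rnDeriv_sub_exp_sub_one hζ hB)).trans
    (lintegral_mono fun t => ?_)
  exact ENNReal.ofReal_le_ofReal (mul_sub_exp_sub_one_le_sOne _ ENNReal.toReal_nonneg)

theorem lintegral_sOne_clip_le_dualFunctional [IsFiniteMeasure u] [IsFiniteMeasure j]
    (hac : j ≪ u) {c : ℝ} (hc : 1 ≤ c) :
    ∫⁻ t, ENNReal.ofReal (sOne (clip c (j.rnDeriv u t).toReal)) ∂u ≤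
      ENNReal.ofReal (dualFunctional u j fun t => log (clip c (j.rnDeriv u t).toReal)) := by
  have hφ : Measurable fun t => log (clip c (j.rnDeriv u t).toReal) :=
    measurable_log.comp (measurable_clip_rnDeriv c)
  have hφB := fun t => abs_log_clip_le hc (j.rnDeriv u t).toReal
  have hpoint : ∀ p, sOne (clip c p) ≤ log (clip c p) * p - (exp (log (clip c p)) - 1) := by
    intro p
    rw [exp_log (clip_pos (one_pos.trans_le hc) p)]
    exact sOne_clip_le hc p
  rw [dualFunctional_eq_integral_rnDeriv hac hφ hφB, ofReal_integral_eq_lintegral_ofReal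
    (integrable_mul_rnDeriv_sub_exp_sub_one hφ hφB)
    (.of_forall fun t => (sOne_nonneg (clip_pos (one_pos.trans_le hc) _).le).trans (hpoint _))]
  exact lintegral_mono fun t => ENNReal.ofReal_le_ofReal (hpoint _)

theorem entropyCost_le_of_forall_lintegral_sOne_clip_le {a : ℝ≥0∞}
    (h : ∀ n : ℕ, ∫⁻ t, ENNReal.ofReal (sOne (clip (n + 1) (j.rnDeriv u t).toReal)) ∂u ≤ a) :
    entropyCost u j ≤ a := by
  have hmeas : ∀ n : ℕ, Measurable fun t =>
      ENNReal.ofReal (sOne (clip (n + 1) (j.rnDeriv u t).toReal)) := fun n =>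
    ENNReal.measurable_ofReal.comp (continuous_sOne.measurable.comp (measurable_clip_rnDeriv _))
  have hlim : ∀ p : ℝ, 0 ≤ p → Tendsto (fun n : ℕ => ENNReal.ofReal (sOne (clip (n + 1) p))) atTop
      (𝓝 (ENNReal.ofReal (sOne p))) := fun p hp =>
    (ENNReal.continuous_ofReal.tendsto _).comp ((continuous_sOne.tendsto _).comp
      ((tendsto_clip hp).comp (tendsto_atTop_add_const_right _ 1 tendsto_natCast_atTop_atTop)))
  calc entropyCost u j
      = ∫⁻ t, liminf (fun n : ℕ => ENNReal.ofReal (sOne (clip (n + 1) (j.rnDeriv u t).toReal)))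
          atTop ∂u :=
        lintegral_congr fun t => ((hlim _ ENNReal.toReal_nonneg).liminf_eq).symm
    _ ≤ liminf (fun n : ℕ => ∫⁻ t, ENNReal.ofReal (sOne (clip (n + 1) (j.rnDeriv u t).toReal)) ∂u)
          atTop := lintegral_liminf_le hmeas
    _ ≤ a := liminf_le_of_frequently_le' (.of_forall h)

theorem dualFunctional_sub_le [IsFiniteMeasure u] [IsFiniteMeasure j] {φ ψ : α → ℝ}
    (hφ : Measurable φ) (hψ : Measurable ψ) {B : ℝ} (hφB : ∀ t, |φ t| ≤ B)
    (hψB : ∀ t, |ψ t| ≤ B) :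
    dualFunctional u j φ - dualFunctional u j ψ ≤ (1 + exp B) * ∫ t, |ψ t - φ t| ∂(u + j) := by
  have hφint {ν : Measure α} [IsFiniteMeasure ν] : Integrable φ ν :=
    .of_bound hφ.aestronglyMeasurable B (.of_forall hφB)
  have hψint {ν : Measure α} [IsFiniteMeasure ν] : Integrable ψ ν :=
    .of_bound hψ.aestronglyMeasurable B (.of_forall hψB)
  have hdist {ν : Measure α} [IsFiniteMeasure ν] : Integrable (fun t => |ψ t - φ t|) ν :=
    (hψint.sub hφint).abs
  have hj : ∫ t, φ t ∂j - ∫ t, ψ t ∂j ≤ ∫ t, |ψ t - φ t| ∂j := by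
    rw [← integral_sub hφint hψint]
    exact integral_mono (hφint.sub hψint) hdist fun t => by
      simpa only [abs_sub_comm] using le_abs_self (φ t - ψ t)
  have hu : ∫ t, (exp (ψ t) - 1) ∂u - ∫ t, (exp (φ t) - 1) ∂u ≤
      exp B * ∫ t, |ψ t - φ t| ∂u := by
    have hψexp := integrable_exp_sub_one (μ := u) hψ fun t => (abs_le.1 (hψB t)).2
    have hφexp := integrable_exp_sub_one (μ := u) hφ fun t => (abs_le.1 (hφB t)).2
    rw [← integral_sub hψexp hφexp, ← integral_const_mul]
    refine integral_mono (hψexp.sub hφexp) (hdist.const_mul _) fun t => ?_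
    calc exp (ψ t) - 1 - (exp (φ t) - 1) ≤ exp (ψ t) * (ψ t - φ t) := by
          linarith [exp_sub_exp_le_exp_mul_sub (ψ t) (φ t)]
      _ ≤ exp (ψ t) * |ψ t - φ t| := mul_le_mul_of_nonneg_left (le_abs_self _) (exp_pos _).le
      _ ≤ exp B * |ψ t - φ t| :=
          mul_le_mul_of_nonneg_right (exp_le_exp.2 (abs_le.1 (hψB t)).2) (abs_nonneg _)
  have hdj : 0 ≤ ∫ t, |ψ t - φ t| ∂j := integral_nonneg fun t => abs_nonneg _
  have hdu : 0 ≤ ∫ t, |ψ t - φ t| ∂u := integral_nonneg fun t => abs_nonneg _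
  rw [integral_add_measure hdist hdist]
  unfold dualFunctional
  nlinarith [mul_nonneg (exp_pos B).le hdj]

end DualFunctional

section Topological

variable {α : Type*} [MeasurableSpace α] [TopologicalSpace α] {u j : Measure α}

theorem exists_continuous_abs_le_integral_abs_sub_le [NormalSpace α] [BorelSpace α]
    {μ : Measure α} [IsFiniteMeasure μ] [μ.WeaklyRegular] {φ : α → ℝ} (hφ : Measurable φ)
    {B : ℝ} (hB : ∀ t, |φ t| ≤ B) {δ : ℝ} (hδ : 0 < δ) :
    ∃ ζ : C(α, ℝ), (∀ t, |ζ t| ≤ B) ∧ ∫ t, |ζ t - φ t| ∂μ ≤ δ := by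
  have hφint : Integrable φ μ := .of_bound hφ.aestronglyMeasurable B (.of_forall hB)
  obtain ⟨g, hg, hgint⟩ := hφint.exists_boundedContinuous_integral_sub_le hδ
  let ζ : C(α, ℝ) := ⟨fun t => max (min (g t) B) (-B), by fun_prop⟩
  have hζB : ∀ t, |ζ t| ≤ B := fun t =>
    abs_le.2 ⟨le_max_right _ _, max_le (min_le_right _ _) (by linarith [abs_nonneg (φ t), hB t])⟩
  have hclose : ∀ t, |ζ t - φ t| ≤ ‖φ t - g t‖ := by
    intro t
    obtain ⟨hlo, hhi⟩ := abs_le.1 (hB t)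
    calc |ζ t - φ t| = |max (min (g t) B) (-B) - max (min (φ t) B) (-B)| := by
          rw [min_eq_left hhi, max_eq_left hlo]; rfl
      _ ≤ |min (g t) B - min (φ t) B| := abs_max_sub_max_le_abs _ _ _
      _ ≤ ‖φ t - g t‖ := by
          simpa [Real.norm_eq_abs, abs_sub_comm] using abs_min_sub_min_le_max (g t) B (φ t) B
  have hζint : Integrable ζ μ := .of_bound ζ.continuous.aestronglyMeasurable B (.of_forall hζB)
  exact ⟨ζ, hζB, (integral_mono (hζint.sub hφint).abs (hφint.sub hgint).norm hclose).trans hg⟩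

theorem dualFunctional_le_iSup_continuous [NormalSpace α] [BorelSpace α] [IsFiniteMeasure u]
    [IsFiniteMeasure j] [(u + j).WeaklyRegular] {φ : α → ℝ} (hφ : Measurable φ) {B : ℝ}
    (hB : ∀ t, |φ t| ≤ B) :
    (dualFunctional u j φ : EReal) ≤ ⨆ ζ : C(α, ℝ), (dualFunctional u j ζ : EReal) := by
  refine EReal.le_of_forall_lt_iff_le.1 fun z hz => ?_
  by_contra! hzφ
  have hgap : 0 < dualFunctional u j φ - z := sub_pos.2 (EReal.coe_lt_coe_iff.1 hzφ)
  obtain ⟨ζ, hζB, hζ⟩ := exists_continuous_abs_le_integral_abs_sub_le (μ := u + j) hφ hB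
    (div_pos hgap (by positivity : (0 : ℝ) < 1 + exp B))
  have hle := (dualFunctional_sub_le hφ ζ.continuous.measurable hB hζB).trans
    (mul_le_mul_of_nonneg_left hζ (by positivity))
  rw [mul_div_cancel₀ _ (by positivity)] at hle
  have hzζ : (z : EReal) ≤ dualFunctional u j ζ := EReal.coe_le_coe_iff.2 (by linarith)
  exact (hzζ.trans (le_iSup (fun ζ : C(α, ℝ) => (dualFunctional u j ζ : EReal)) ζ)).not_gt hz

theorem exists_isClosed_measure_eq_zero_lt_of_not_absolutelyContinuous [IsFiniteMeasure j]
    [j.WeaklyRegular] (h : ¬ j ≪ u) : ∃ F, IsClosed F ∧ u F = 0 ∧ 0 < j F := by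
  obtain ⟨A, hA, huA, hjA⟩ : ∃ A, MeasurableSet A ∧ u A = 0 ∧ j A ≠ 0 := by
    contrapose! h
    exact Measure.AbsolutelyContinuous.mk fun A hA huA => h A hA huA
  obtain ⟨F, hFA, hF, hjF⟩ := hA.exists_lt_isClosed_of_ne_top (measure_ne_top j A)
    (pos_iff_ne_zero.2 hjA)
  exact ⟨F, hF, measure_mono_null hFA huA, hjF⟩

theorem exists_continuous_dualFunctional_ge [NormalSpace α] [OpensMeasurableSpace α]
    [IsFiniteMeasure u] [IsFiniteMeasure j] [u.OuterRegular] {F : Set α} (hF : IsClosed F)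
    (huF : u F = 0) {M : ℝ} (hM : 0 ≤ M) :
    ∃ ζ : C(α, ℝ), M * j.real F - 1 ≤ dualFunctional u j ζ := by
  obtain ⟨U, hFU, hU, huU⟩ := F.exists_isOpen_lt_of_lt (ENNReal.ofReal (exp (-M)))
    (huF ▸ ENNReal.ofReal_pos.2 (exp_pos _))
  obtain ⟨f, hf0, hf1, hf01⟩ := exists_continuous_zero_one_of_isClosed hU.isClosed_compl hF
    (disjoint_compl_left_iff_subset.2 hFU)
  have hMf : Integrable (fun t => M * f t) j := by
    refine .of_bound (by fun_prop) M (.of_forall fun t => ?_)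
    rw [norm_of_nonneg (mul_nonneg hM (hf01 t).1)]
    exact mul_le_of_le_one_right hM (hf01 t).2
  have hj : M * j.real F ≤ ∫ t, M * f t ∂j := by
    rw [mul_comm, ← smul_eq_mul, ← integral_indicator_const _ hF.measurableSet]
    refine integral_mono ((integrable_const M).indicator hF.measurableSet) hMf fun t => ?_
    by_cases ht : t ∈ F
    · simp [indicator_of_mem ht, hf1 ht]
    · simpa [indicator_of_notMem ht] using mul_nonneg hM (hf01 t).1
  have hu : ∫ t, (exp (M * f t) - 1) ∂u ≤ 1 := by
    have hexp : ∀ t, exp (M * f t) - 1 ≤ U.indicator (fun _ => exp M) t := by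
      intro t
      by_cases ht : t ∈ U
      · rw [indicator_of_mem ht]
        linarith [exp_le_exp.2 (mul_le_of_le_one_right hM (hf01 t).2)]
      · simp [indicator_of_notMem ht, hf0 ht]
    calc ∫ t, (exp (M * f t) - 1) ∂u ≤ ∫ t, U.indicator (fun _ => exp M) t ∂u :=
          integral_mono (integrable_exp_sub_one (by fun_prop)
            fun t => mul_le_of_le_one_right hM (hf01 t).2)
            ((integrable_const _).indicator hU.measurableSet) hexp
      _ = u.real U * exp M := integral_indicator_const _ hU.measurableSet
      _ ≤ exp (-M) * exp M := mul_le_mul_of_nonneg_right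
          (ENNReal.toReal_le_of_le_ofReal (exp_pos _).le huU.le) (exp_pos _).le
      _ = 1 := by rw [← exp_add, neg_add_cancel, exp_zero]
  exact ⟨M • f, by simp only [dualFunctional, ContinuousMap.smul_apply, smul_eq_mul]; linarith⟩

theorem iSup_dualFunctional_eq_top [NormalSpace α] [OpensMeasurableSpace α] [IsFiniteMeasure u]
    [IsFiniteMeasure j] [u.OuterRegular] [j.WeaklyRegular] (h : ¬ j ≪ u) :
    ⨆ ζ : C(α, ℝ), (dualFunctional u j ζ : EReal) = ⊤ := by
  obtain ⟨F, hF, huF, hjF⟩ := exists_isClosed_measure_eq_zero_lt_of_not_absolutelyContinuous h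
  have hκ : 0 < j.real F := ENNReal.toReal_pos hjF.ne' (measure_ne_top j F)
  refine (EReal.eq_top_iff_forall_lt _).2 fun y => ?_
  obtain ⟨ζ, hζ⟩ := exists_continuous_dualFunctional_ge (j := j) hF huF
    (div_nonneg (by positivity : 0 ≤ |y| + 2) hκ.le)
  rw [div_mul_cancel₀ _ hκ.ne'] at hζ
  exact (EReal.coe_lt_coe_iff.2 (by linarith [le_abs_self y])).trans_le
    (le_iSup (fun ζ : C(α, ℝ) => (dualFunctional u j ζ : EReal)) ζ)

end Topological

theorem iSup_dualFunctional_eq_entropyCost {α : Type*} [MeasurableSpace α] [TopologicalSpace α]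
    [TopologicalSpace.PseudoMetrizableSpace α] [CompactSpace α] [BorelSpace α]
    {u j : Measure α} [IsFiniteMeasure u] [IsFiniteMeasure j] (hac : j ≪ u) :
    ⨆ ζ : C(α, ℝ), (dualFunctional u j ζ : EReal) = entropyCost u j := by
  refine le_antisymm (iSup_le fun ζ =>
    dualFunctional_le_entropyCost hac ζ.continuous.measurable ζ.norm_coe_le_norm) ?_
  set S := ⨆ ζ : C(α, ℝ), (dualFunctional u j ζ : EReal)
  have hS : 0 ≤ S := by
    have h0 : dualFunctional u j ⇑(0 : C(α, ℝ)) = 0 := by simp [dualFunctional]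
    exact (EReal.coe_nonneg.2 h0.ge).trans
      (le_iSup (fun ζ : C(α, ℝ) => (dualFunctional u j ζ : EReal)) 0)
  rw [← EReal.coe_toENNReal hS, EReal.coe_ennreal_le_coe_ennreal_iff]
  refine entropyCost_le_of_forall_lintegral_sOne_clip_le fun n => ?_
  have hc : (1 : ℝ) ≤ n + 1 := le_add_of_nonneg_left n.cast_nonneg
  refine (lintegral_sOne_clip_le_dualFunctional hac hc).trans ?_
  exact EReal.toENNReal_le_toENNReal (dualFunctional_le_iSup_continuous
    (measurable_log.comp (measurable_clip_rnDeriv _)) fun t => abs_log_clip_le hc _)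

theorem entropic_dual_measures_general (T : ℝ)
    (u j : Measure (Set.Icc (0:ℝ) T)) [IsFiniteMeasure u] [IsFiniteMeasure j] :
    (j ≪ u →
      (⨆ ζ : C(Set.Icc (0:ℝ) T, ℝ),
          ((((∫ t, ζ t ∂j) - ∫ t, (Real.exp (ζ t) - 1) ∂u : ℝ)) : EReal))
        = ((∫⁻ t, ENNReal.ofReal (sOne ((j.rnDeriv u t).toReal)) ∂u) : ℝ≥0∞)) ∧
    (¬ j ≪ u →
      (⨆ ζ : C(Set.Icc (0:ℝ) T, ℝ),
          ((((∫ t, ζ t ∂j) - ∫ t, (Real.exp (ζ t) - 1) ∂u : ℝ)) : EReal)) = ⊤) :=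
  ⟨iSup_dualFunctional_eq_entropyCost, iSup_dualFunctional_eq_top⟩

/-- Dual formulation of the entropic cost for finite nonnegative Borel measures `u, j`
on `[0,T]`: the supremum over continuous `ζ : [0,T] → ℝ` of
`∫ ζ dj − ∫ (e^ζ − 1) du` equals `∫ s((dj/du)(t)∣1) u(dt)` if `j ≪ u`, and is `+∞`
otherwise. -/
theorem entropic_dual_measures (T : ℝ) (hT : 0 < T)
    (u j : Measure (Set.Icc (0:ℝ) T)) [IsFiniteMeasure u] [IsFiniteMeasure j] :
    (j ≪ u →
      (⨆ ζ : C(Set.Icc (0:ℝ) T, ℝ),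
          ((((∫ t, ζ t ∂j) - ∫ t, (Real.exp (ζ t) - 1) ∂u : ℝ)) : EReal))
        = ((∫⁻ t, ENNReal.ofReal (sOne ((j.rnDeriv u t).toReal)) ∂u) : ℝ≥0∞)) ∧
    (¬ j ≪ u →
      (⨆ ζ : C(Set.Icc (0:ℝ) T, ℝ),
          ((((∫ t, ζ t ∂j) - ∫ t, (Real.exp (ζ t) - 1) ∂u : ℝ)) : EReal)) = ⊤) :=
  entropic_dual_measures_general T u j
end

section
/- Let T > 0, let u ∈ L¹([0,T]) be nonnegative and let j̃ ∈ L¹([0,T]). Then sup_{ζ ∈ C([0,T])} ∫₀ᵀ [ ζ(t)·j̃(t) − (1/2)·u(t)·ζ(t)² ] dt equals (1/2) ∫₀ᵀ j̃(t)²/u(t) dt if j̃(t) = 0 for almost every t with u(t) = 0 and t ↦ j̃(t)²/u(t) is integrable, and equals +∞ otherwise. -/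
/-!
For `a ≥ 0` the pointwise supremum `q(a, b) = ⨆ z, (z b - a z² / 2)` equals `b² / (2a)`, or `+∞`
when `a = 0 ≠ b`. Integrating the pointwise bound, every `ζ` has value at most `∫⁻ q(u, j̃)`.
Conversely, the truncated maximisers `clamp_n (j̃ / u)` (and `±n` where `u = 0`) are bounded and
measurable, and their integrands converge pointwise to `q(u, j̃)`, so by Fatou their values reach
`∫⁻ q(u, j̃)`. A bounded measurable function is an a.e. limit of continuous functions with the same
bound, and dominated convergence transfers these values to continuous `ζ`. Hence the supremum is
`∫⁻ q(u, j̃)`, which is `½ ∫ j̃² / u` under the two conditions and `+∞` otherwise.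
-/

open MeasureTheory Set Filter
open scoped ENNReal Topology

/-- For `0 ≤ a`, this is `⨆ z, (z * b - a * z ^ 2 / 2)`; at `a = b = 0` it relies on `0 / 0 = 0`. -/
noncomputable def quadConj (a b : ℝ) : ℝ≥0∞ :=
  if a = 0 ∧ b ≠ 0 then ⊤ else ENNReal.ofReal (1 / 2 * (b ^ 2 / a))

/-- The maximiser `b / a` of `z ↦ z * b - a * z ^ 2 / 2`, truncated to `[-n, n]`; for `a = 0` the
supremum is approached by `±n`. -/
noncomputable def quadMaximizerTrunc (n : ℕ) (a b : ℝ) : ℝ :=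
  if a = 0 then (if 0 ≤ b then n else -n) else max (-n) (min n (b / a))

lemma sq_max_min_le_mul {C : ℝ} (hC : 0 ≤ C) (x : ℝ) :
    max (-C) (min C x) ^ 2 ≤ max (-C) (min C x) * x := by
  rcases le_total x (-C) with h | h
  · rw [min_eq_right (by linarith), max_eq_left h]; nlinarith
  rcases le_total C x with h' | h'
  · rw [min_eq_left h', max_eq_right (by linarith)]; nlinarith
  · rw [min_eq_right h', max_eq_right h, sq]

lemma max_min_eq_self {C x : ℝ} (h : |x| ≤ C) : max (-C) (min C x) = x := by
  rw [abs_le] at h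
  rw [min_eq_right h.2, max_eq_right h.1]

lemma abs_max_min_le (C x : ℝ) : |max (-C) (min C x)| ≤ |C| := by
  rcases le_total 0 C with hC | hC
  · rw [abs_of_nonneg hC]
    exact abs_le.2 ⟨le_max_left _ _, max_le (by linarith) (min_le_left _ _)⟩
  · rw [max_eq_left ((min_le_left _ _).trans (by linarith)), abs_neg]

lemma ofReal_le_quadConj {a : ℝ} (ha : 0 ≤ a) (b z : ℝ) :
    ENNReal.ofReal (z * b - 1 / 2 * a * z ^ 2) ≤ quadConj a b := by
  unfold quadConj
  split_ifs with h
  · exact le_top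
  refine ENNReal.ofReal_le_ofReal ?_
  rcases ha.eq_or_lt with rfl | ha
  · simp [not_and_not_right.1 h rfl]
  · rw [← sub_nonneg]
    have : 1 / 2 * (b ^ 2 / a) - (z * b - 1 / 2 * a * z ^ 2) = (b - a * z) ^ 2 / (2 * a) := by
      field_simp; ring
    rw [this]; positivity

lemma quadConj_eq_ofReal {a b : ℝ} (h : a = 0 → b = 0) :
    quadConj a b = ENNReal.ofReal (1 / 2 * (b ^ 2 / a)) :=
  if_neg fun h' => h'.2 (h h'.1)

lemma abs_quadMaximizerTrunc_le (n : ℕ) (a b : ℝ) : |quadMaximizerTrunc n a b| ≤ n := by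
  unfold quadMaximizerTrunc
  split_ifs
  · simp
  · simp
  · simpa using abs_max_min_le (n : ℝ) (b / a)

lemma quadMaximizerTrunc_objective_nonneg {a : ℝ} (ha : 0 ≤ a) (n : ℕ) (b : ℝ) :
    0 ≤ quadMaximizerTrunc n a b * b - 1 / 2 * a * quadMaximizerTrunc n a b ^ 2 := by
  unfold quadMaximizerTrunc
  split_ifs with h0 hb
  · simp [h0]; positivity
  · simp [h0]; nlinarith
  · have hb : b = a * (b / a) := by field_simp
    have := sq_max_min_le_mul (Nat.cast_nonneg n : (0 : ℝ) ≤ n) (b / a)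
    generalize max (-(n : ℝ)) (min n (b / a)) = c at this ⊢
    rw [hb]
    nlinarith [mul_le_mul_of_nonneg_left this ha, mul_nonneg ha (sq_nonneg c)]

lemma tendsto_ofReal_quadMaximizerTrunc_objective {a : ℝ} (ha : 0 ≤ a) (b : ℝ) :
    Tendsto (fun n : ℕ => ENNReal.ofReal
        (quadMaximizerTrunc n a b * b - 1 / 2 * a * quadMaximizerTrunc n a b ^ 2))
      atTop (𝓝 (quadConj a b)) := by
  unfold quadMaximizerTrunc quadConj
  rcases ha.eq_or_lt with rfl | ha
  · rcases eq_or_ne b 0 with rfl | hb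
    · simp
    have hval : ∀ n : ℕ, (if (0:ℝ) ≤ b then (n:ℝ) else -n) * b = n * |b| := by
      intro n; split_ifs with h
      · rw [abs_of_nonneg h]
      · rw [abs_of_neg (not_le.1 h)]; ring
    simp only [if_true, hb, true_and, ne_eq, not_false_eq_true, mul_zero, zero_mul, sub_zero,
      hval]
    exact ENNReal.tendsto_ofReal_atTop.comp
      (tendsto_natCast_atTop_atTop.atTop_mul_const (abs_pos.2 hb))
  · simp only [ha.ne', false_and, if_false]
    refine tendsto_const_nhds.congr' ?_
    filter_upwards [eventually_ge_atTop ⌈|b / a|⌉₊] with n hn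
    rw [max_min_eq_self ((Nat.le_ceil _).trans (by exact_mod_cast hn))]
    congr 1
    field_simp
    ring

lemma measurable_quadConj : Measurable (Function.uncurry quadConj) := by
  refine Measurable.ite ?_ measurable_const (by fun_prop)
  exact (measurableSet_eq_fun measurable_fst measurable_const).inter
    (measurableSet_eq_fun measurable_snd measurable_const).compl

lemma measurable_quadMaximizerTrunc (n : ℕ) :
    Measurable (Function.uncurry (quadMaximizerTrunc n)) := by
  refine Measurable.ite (measurableSet_eq_fun measurable_fst measurable_const) ?_ (by fun_prop)
  exact Measurable.ite (measurableSet_le measurable_const measurable_snd) measurable_const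
    measurable_const

lemma abs_mul_sub_half_mul_sq_le {a b z C : ℝ} (hz : |z| ≤ C) :
    |z * b - 1 / 2 * a * z ^ 2| ≤ C * |b| + 1 / 2 * C ^ 2 * |a| := by
  have hz2 : z ^ 2 ≤ C ^ 2 := sq_le_sq' (abs_le.1 hz).1 (abs_le.1 hz).2
  calc |z * b - 1 / 2 * a * z ^ 2| ≤ |z| * |b| + 1 / 2 * z ^ 2 * |a| := by
        refine (abs_sub _ _).trans_eq ?_
        rw [abs_mul, abs_mul, abs_mul, abs_of_nonneg (sq_nonneg z)]; norm_num; ring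
    _ ≤ C * |b| + 1 / 2 * C ^ 2 * |a| := by gcongr

lemma ofReal_integral_le_lintegral_ofReal_s11 {X : Type*} [MeasurableSpace X] {μ : Measure X}
    (f : X → ℝ) : ENNReal.ofReal (∫ x, f x ∂μ) ≤ ∫⁻ x, ENNReal.ofReal (f x) ∂μ := by
  by_cases hf : Integrable f μ
  · calc ENNReal.ofReal (∫ x, f x ∂μ) ≤ ENNReal.ofReal (∫ x, max (f x) 0 ∂μ) :=
          ENNReal.ofReal_le_ofReal (integral_mono hf hf.pos_part fun x => le_max_left _ _)
      _ = ∫⁻ x, ENNReal.ofReal (f x) ∂μ := by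
          rw [ofReal_integral_eq_lintegral_ofReal hf.pos_part
            (ae_of_all _ fun x => le_max_right _ _)]
          simp [ENNReal.ofReal_max]
  · simp [integral_undef hf]

section QuadDual

variable {X : Type*} [MeasurableSpace X] {μ : Measure X} {u j : X → ℝ}

noncomputable def quadDual (μ : Measure X) (u j f : X → ℝ) : ℝ :=
  ∫ t, (f t * j t - 1 / 2 * u t * f t ^ 2) ∂μ

lemma quadDual_le_lintegral_quadConj (hu0 : 0 ≤ᵐ[μ] u) (f : X → ℝ) :
    (quadDual μ u j f : EReal) ≤ ((∫⁻ t, quadConj (u t) (j t) ∂μ : ℝ≥0∞) : EReal) := by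
  calc (quadDual μ u j f : EReal) ≤ (ENNReal.ofReal (quadDual μ u j f) : EReal) := by
        rw [EReal.coe_ennreal_ofReal]; exact_mod_cast le_max_left _ _
    _ ≤ _ := by
        refine EReal.coe_ennreal_le_coe_ennreal_iff.2 <|
          (ofReal_integral_le_lintegral_ofReal_s11 _).trans (lintegral_mono_ae ?_)
        filter_upwards [hu0] with t ht using ofReal_le_quadConj ht (j t) (f t)

lemma integrable_quadDual_integrand (hu : Integrable u μ) (hj : Integrable j μ) {f : X → ℝ}
    (hf : AEStronglyMeasurable f μ) {C : ℝ} (hfC : ∀ᵐ t ∂μ, |f t| ≤ C) :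
    Integrable (fun t => f t * j t - 1 / 2 * u t * f t ^ 2) μ := by
  refine ((hj.abs.const_mul C).add (hu.abs.const_mul (1 / 2 * C ^ 2))).mono'
    ((hf.mul hj.1).sub ((hu.1.const_mul _).mul (hf.pow 2))) ?_
  filter_upwards [hfC] with t ht using abs_mul_sub_half_mul_sq_le ht

lemma tendsto_quadDual_of_tendsto_ae (hu : Integrable u μ) (hj : Integrable j μ)
    {g : ℕ → X → ℝ} {f : X → ℝ} (hg : ∀ n, AEStronglyMeasurable (g n) μ) {C : ℝ}
    (hgC : ∀ n, ∀ᵐ t ∂μ, |g n t| ≤ C)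
    (hlim : ∀ᵐ t ∂μ, Tendsto (fun n => g n t) atTop (𝓝 (f t))) :
    Tendsto (fun n => quadDual μ u j (g n)) atTop (𝓝 (quadDual μ u j f)) := by
  refine tendsto_integral_of_dominated_convergence
    (fun t => C * |j t| + 1 / 2 * C ^ 2 * |u t|)
    (fun n => ((hg n).mul hj.1).sub ((hu.1.const_mul _).mul ((hg n).pow 2)))
    ((hj.abs.const_mul C).add (hu.abs.const_mul _))
    (fun n => (hgC n).mono fun t ht => abs_mul_sub_half_mul_sq_le ht) ?_
  filter_upwards [hlim] with t ht
  exact (ht.mul tendsto_const_nhds).sub (tendsto_const_nhds.mul (ht.pow 2))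

end QuadDual

lemma exists_seq_continuous_tendsto_ae {X E : Type*} [TopologicalSpace X] [NormalSpace X]
    [MeasurableSpace X] [BorelSpace X] [NormedAddCommGroup E] [NormedSpace ℝ E] {μ : Measure X}
    [μ.WeaklyRegular] {f : X → E} (hf : Integrable f μ) :
    ∃ g : ℕ → C(X, E), ∀ᵐ x ∂μ, Tendsto (fun n => g n x) atTop (𝓝 (f x)) := by
  choose g hg using fun n : ℕ => hf.exists_boundedContinuous_lintegral_sub_le
    (ENNReal.inv_ne_zero.2 (ENNReal.natCast_ne_top n))
  have hconv : TendstoInMeasure μ (fun n => g n) atTop f := by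
    refine tendstoInMeasure_of_tendsto_eLpNorm one_ne_zero
      (fun n => (hg n).2.aestronglyMeasurable) hf.1 ?_
    refine tendsto_of_tendsto_of_tendsto_of_le_of_le tendsto_const_nhds
      ENNReal.tendsto_inv_nat_nhds_zero (fun _ => bot_le) fun n => ?_
    simpa only [eLpNorm_one_eq_lintegral_enorm, Pi.sub_apply, enorm_sub_rev] using (hg n).1
  obtain ⟨ns, -, hns⟩ := hconv.exists_seq_tendsto_ae
  exact ⟨fun n => (g (ns n)).toContinuousMap, hns⟩

section Continuous

variable {X : Type*} [TopologicalSpace X] [NormalSpace X] [MeasurableSpace X] [BorelSpace X]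
  {μ : Measure X} [IsFiniteMeasure μ] [μ.WeaklyRegular] {u j : X → ℝ}

lemma quadDual_le_iSup_continuous (hu : Integrable u μ) (hj : Integrable j μ) {f : X → ℝ}
    (hf : AEStronglyMeasurable f μ) {C : ℝ} (hfC : ∀ᵐ t ∂μ, |f t| ≤ C) :
    (quadDual μ u j f : EReal) ≤ ⨆ ζ : C(X, ℝ), (quadDual μ u j ζ : EReal) := by
  obtain ⟨g, hg⟩ := exists_seq_continuous_tendsto_ae
    (.of_bound hf C (hfC.mono fun _ h => by rwa [Real.norm_eq_abs]))
  let ζ : ℕ → C(X, ℝ) := fun n => ⟨fun x => max (-C) (min C (g n x)), by fun_prop⟩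
  have hζ : ∀ᵐ x ∂μ, Tendsto (fun n => ζ n x) atTop (𝓝 (f x)) := by
    filter_upwards [hg, hfC] with x hx hxC
    rw [← max_min_eq_self hxC]
    exact ((continuous_const.max (continuous_const.min continuous_id)).tendsto _).comp hx
  refine le_of_tendsto' ((continuous_coe_real_ereal.tendsto _).comp <|
    tendsto_quadDual_of_tendsto_ae hu hj (fun n => (ζ n).continuous.aestronglyMeasurable)
      (fun n => ae_of_all _ fun x => abs_max_min_le C (g n x)) hζ) fun n => ?_
  exact le_iSup (fun ζ : C(X, ℝ) => (quadDual μ u j ζ : EReal)) (ζ n)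

lemma lintegral_quadConj_le_iSup_continuous (hu : Integrable u μ) (hj : Integrable j μ)
    (hu0 : 0 ≤ᵐ[μ] u) :
    ((∫⁻ t, quadConj (u t) (j t) ∂μ : ℝ≥0∞) : EReal) ≤
      ⨆ ζ : C(X, ℝ), (quadDual μ u j ζ : EReal) := by
  set S := ⨆ ζ : C(X, ℝ), (quadDual μ u j ζ : EReal)
  set F : ℕ → X → ℝ := fun n t => quadMaximizerTrunc n (u t) (j t)
  have hF n : AEStronglyMeasurable (F n) μ :=
    ((measurable_quadMaximizerTrunc n).comp_aemeasurable
      (hu.aemeasurable.prodMk hj.aemeasurable)).aestronglyMeasurable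
  have hFC n : ∀ᵐ t ∂μ, |F n t| ≤ n := ae_of_all _ fun t => abs_quadMaximizerTrunc_le n _ _
  have hF_nonneg n : 0 ≤ᵐ[μ] fun t => F n t * j t - 1 / 2 * u t * F n t ^ 2 :=
    hu0.mono fun t ht => quadMaximizerTrunc_objective_nonneg ht n (j t)
  have hS0 : 0 ≤ S := (EReal.coe_nonneg.2 (integral_nonneg_of_ae (hF_nonneg 0))).trans
    (quadDual_le_iSup_continuous hu hj (hF 0) (hFC 0))
  have hfatou : ∫⁻ t, quadConj (u t) (j t) ∂μ ≤
      liminf (fun n => ENNReal.ofReal (quadDual μ u j (F n))) atTop := by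
    calc ∫⁻ t, quadConj (u t) (j t) ∂μ
        = ∫⁻ t, liminf (fun n => ENNReal.ofReal (F n t * j t - 1 / 2 * u t * F n t ^ 2))
            atTop ∂μ :=
          lintegral_congr_ae <| hu0.mono fun t ht =>
            (tendsto_ofReal_quadMaximizerTrunc_objective ht (j t)).liminf_eq.symm
      _ ≤ liminf (fun n => ∫⁻ t, ENNReal.ofReal (F n t * j t - 1 / 2 * u t * F n t ^ 2) ∂μ)
          atTop :=
          lintegral_liminf_le' fun n =>
            (integrable_quadDual_integrand hu hj (hF n) (hFC n)).1.aemeasurable.ennreal_ofReal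
      _ = liminf (fun n => ENNReal.ofReal (quadDual μ u j (F n))) atTop := by
          congr with n
          exact (ofReal_integral_eq_lintegral_ofReal
            (integrable_quadDual_integrand hu hj (hF n) (hFC n)) (hF_nonneg n)).symm
  rw [← EReal.coe_toENNReal hS0, EReal.coe_ennreal_le_coe_ennreal_iff]
  refine hfatou.trans (liminf_le_of_frequently_le' (Frequently.of_forall fun n => ?_))
  rw [← EReal.toENNReal_coe (x := ENNReal.ofReal _)]
  refine EReal.toENNReal_le_toENNReal ?_
  rw [EReal.coe_ennreal_ofReal,
    max_eq_left (show 0 ≤ quadDual μ u j (F n) from integral_nonneg_of_ae (hF_nonneg n))]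
  exact quadDual_le_iSup_continuous hu hj (hF n) (hFC n)

end Continuous

section Evaluation

variable {X : Type*} [MeasurableSpace X] {μ : Measure X} {u j : X → ℝ}

lemma lintegral_quadConj_eq_ofReal (hu0 : 0 ≤ᵐ[μ] u) (hae : ∀ᵐ t ∂μ, u t = 0 → j t = 0)
    (hint : Integrable (fun t => j t ^ 2 / u t) μ) :
    ∫⁻ t, quadConj (u t) (j t) ∂μ = ENNReal.ofReal (1 / 2 * ∫ t, j t ^ 2 / u t ∂μ) := by
  rw [← integral_const_mul, ofReal_integral_eq_lintegral_ofReal (hint.const_mul _)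
    (hu0.mono fun t ht => mul_nonneg (by norm_num) (div_nonneg (sq_nonneg _) ht))]
  exact lintegral_congr_ae (hae.mono fun t ht => quadConj_eq_ofReal ht)

lemma lintegral_quadConj_eq_top (hu : AEMeasurable u μ) (hj : AEMeasurable j μ)
    (hu0 : 0 ≤ᵐ[μ] u)
    (h : ¬((∀ᵐ t ∂μ, u t = 0 → j t = 0) ∧ Integrable (fun t => j t ^ 2 / u t) μ)) :
    ∫⁻ t, quadConj (u t) (j t) ∂μ = ⊤ := by
  by_cases hae : ∀ᵐ t ∂μ, u t = 0 → j t = 0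
  · rw [lintegral_congr_ae (hae.mono fun t ht => quadConj_eq_ofReal ht)]
    by_contra hne
    refine h ⟨hae, ?_⟩
    have := (lintegral_ofReal_ne_top_iff_integrable
      ((((hj.pow_const 2).div hu).const_mul _).aestronglyMeasurable)
      (hu0.mono fun t ht => mul_nonneg (by norm_num) (div_nonneg (sq_nonneg _) ht))).1 hne
    exact (integrable_const_mul_iff (by norm_num) _).1 this
  · rw [ae_iff] at hae
    refine lintegral_eq_top_of_measure_eq_top_ne_zero
      (measurable_quadConj.comp_aemeasurable (hu.prodMk hj)) fun h0 => hae ?_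
    refine measure_mono_null (fun t ht => ?_) h0
    simp [quadConj, Classical.not_imp.1 ht]

end Evaluation

lemma iSup_continuousOn_quadDual_eq_lintegral_quadConj {X : Type*} [TopologicalSpace X]
    [NormalSpace X] [MeasurableSpace X] [BorelSpace X] {μ : Measure X} {s : Set X}
    [IsFiniteMeasure (μ.restrict s)] [(μ.restrict s).WeaklyRegular] {u j : X → ℝ}
    (hu : IntegrableOn u s μ) (hj : IntegrableOn j s μ) (hu0 : 0 ≤ᵐ[μ.restrict s] u) :
    ⨆ ζ : {f : X → ℝ // ContinuousOn f s}, (quadDual (μ.restrict s) u j ζ.1 : EReal) =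
      ((∫⁻ t in s, quadConj (u t) (j t) ∂μ : ℝ≥0∞) : EReal) :=
  le_antisymm (iSup_le fun ζ => quadDual_le_lintegral_quadConj hu0 ζ.1)
    ((lintegral_quadConj_le_iSup_continuous hu hj hu0).trans
      (iSup_mono' fun ζ => ⟨⟨ζ, ζ.continuous.continuousOn⟩, le_rfl⟩))

theorem quadratic_dual_L1_general (T : ℝ) (u jt : ℝ → ℝ)
    (hu : IntegrableOn u (Icc 0 T)) (hjt : IntegrableOn jt (Icc 0 T))
    (hu0 : ∀ t ∈ Icc (0:ℝ) T, 0 ≤ u t) :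
    (((∀ᵐ t ∂(volume.restrict (Icc (0:ℝ) T)), u t = 0 → jt t = 0) ∧
        IntegrableOn (fun t => jt t ^ 2 / u t) (Icc 0 T)) →
      (⨆ ζ : {f : ℝ → ℝ // ContinuousOn f (Icc 0 T)},
          (((∫ t in Icc (0:ℝ) T, (ζ.1 t * jt t - (1/2) * u t * ζ.1 t ^ 2) : ℝ)) : EReal))
        = (((1/2) * ∫ t in Icc (0:ℝ) T, jt t ^ 2 / u t : ℝ) : EReal)) ∧
    (¬ ((∀ᵐ t ∂(volume.restrict (Icc (0:ℝ) T)), u t = 0 → jt t = 0) ∧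
        IntegrableOn (fun t => jt t ^ 2 / u t) (Icc 0 T)) →
      (⨆ ζ : {f : ℝ → ℝ // ContinuousOn f (Icc 0 T)},
          (((∫ t in Icc (0:ℝ) T, (ζ.1 t * jt t - (1/2) * u t * ζ.1 t ^ 2) : ℝ)) : EReal))
        = ⊤) := by
  have hu_nonneg : 0 ≤ᵐ[volume.restrict (Icc (0:ℝ) T)] u :=
    (ae_restrict_mem measurableSet_Icc).mono hu0
  have hsup := iSup_continuousOn_quadDual_eq_lintegral_quadConj hu hjt hu_nonneg
  simp only [quadDual] at hsup
  rw [hsup]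
  refine ⟨fun h => ?_, fun h => ?_⟩
  · rw [lintegral_quadConj_eq_ofReal hu_nonneg h.1 h.2, EReal.coe_ennreal_ofReal, max_eq_left]
    exact mul_nonneg (by norm_num)
      (integral_nonneg_of_ae (hu_nonneg.mono fun t ht => div_nonneg (sq_nonneg _) ht))
  · rw [lintegral_quadConj_eq_top hu.aemeasurable hjt.aemeasurable hu_nonneg h,
      EReal.coe_ennreal_top]

/-- Dual formulation of the quadratic cost: for a nonnegative `u ∈ L¹([0,T])` and
`j̃ ∈ L¹([0,T])`, the supremum (realised in `EReal`) over continuous `ζ` of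
`∫₀ᵀ (ζ j̃ − ½ u ζ²) dt` equals `½ ∫₀ᵀ j̃²/u dt` if `j̃ = 0` a.e. where `u = 0` and
`j̃²/u` is integrable, and equals `+∞` otherwise. (Here `j̃(t)²/u(t) := 0` at points
where both vanish, which matches Lean's convention `x / 0 = 0`.) -/
theorem quadratic_dual_L1 (T : ℝ) (hT : 0 < T) (u jt : ℝ → ℝ)
    (hu : IntegrableOn u (Icc 0 T)) (hjt : IntegrableOn jt (Icc 0 T))
    (hu0 : ∀ t ∈ Icc (0:ℝ) T, 0 ≤ u t) :
    (((∀ᵐ t ∂(volume.restrict (Icc (0:ℝ) T)), u t = 0 → jt t = 0) ∧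
        IntegrableOn (fun t => jt t ^ 2 / u t) (Icc 0 T)) →
      (⨆ ζ : {f : ℝ → ℝ // ContinuousOn f (Icc 0 T)},
          (((∫ t in Icc (0:ℝ) T, (ζ.1 t * jt t - (1/2) * u t * ζ.1 t ^ 2) : ℝ)) : EReal))
        = (((1/2) * ∫ t in Icc (0:ℝ) T, jt t ^ 2 / u t : ℝ) : EReal)) ∧
    (¬ ((∀ᵐ t ∂(volume.restrict (Icc (0:ℝ) T)), u t = 0 → jt t = 0) ∧
        IntegrableOn (fun t => jt t ^ 2 / u t) (Icc 0 T)) →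
      (⨆ ζ : {f : ℝ → ℝ // ContinuousOn f (Icc 0 T)},
          (((∫ t in Icc (0:ℝ) T, (ζ.1 t * jt t - (1/2) * u t * ζ.1 t ^ 2) : ℝ)) : EReal))
        = ⊤) :=
  quadratic_dual_L1_general T u jt hu hjt hu0
end

section
/- Under the fast–slow network hypotheses, define R_fcyc := { r ∈ R_fast : r₋ ∈ V₀ }. Then the subgraph of fast edges emanating from V₀ consists purely of cycles: for every r ∈ R_fcyc there exist K ≥ 1 and edges r¹, …, r^K ∈ R_fcyc with r¹ = r, r^k₊ = r^{k+1}₋ for all 1 ≤ k < K, and r^K₊ = r¹₋. -/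
/-!
Multiplying the stationarity equations by `ε` and letting `ε → 0` gives balance equations for
the limiting flux `W r = κ_r π_{r₋}` carried by the fast edges with `r₋ ∈ V₀` (all other
fluxes vanish in the limit). So `W` is a nonnegative circulation whose support is `R_fcyc`.
Let `S` be the set of vertices reachable from `r₊` along the support. Every support edge leaving
a vertex of `S` ends in `S`, so the flux out of `S`-vertices is at most the flux into them, with
a deficit of at least `W e` for each support edge `e` entering `S` from outside. Conservation
makes the two fluxes equal, so there is no such edge; in particular `r₋ ∈ S`.
-/

open Filter Topology Finset Relation

section Paths

variable {V R : Type*} (src tgt : R → V)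

def EdgeAdj (P : R → Prop) (u v : V) : Prop :=
  ∃ e, P e ∧ src e = u ∧ tgt e = v

lemma exists_edgePath_of_reflTransGen {P : R → Prop} {r : R} (hr : P r) {b : V}
    (h : ReflTransGen (EdgeAdj src tgt P) (tgt r) b) :
    ∃ K : ℕ, 1 ≤ K ∧ ∃ c : ℕ → R, c 0 = r ∧ (∀ k < K, P (c k)) ∧
      (∀ k, k + 1 < K → tgt (c k) = src (c (k + 1))) ∧ tgt (c (K - 1)) = b := by
  induction h with
  | refl => exact ⟨1, le_rfl, fun _ => r, rfl, fun _ _ => hr, fun k hk => by omega, rfl⟩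
  | tail _ hstep ih =>
    obtain ⟨e, he, rfl, rfl⟩ := hstep
    obtain ⟨K, hK, c, hc0, hcP, hchain, hlast⟩ := ih
    refine ⟨K + 1, by omega, fun k => if k < K then c k else e,
      by simp [hc0, show 0 < K by omega], ?_, ?_, by simp⟩
    · intro k hk
      dsimp only
      split_ifs with hkK
      exacts [hcP k hkK, he]
    · intro k hk
      rcases lt_or_eq_of_le (Nat.le_of_lt_succ hk) with hk' | hk'
      · simp [hk', Nat.lt_of_succ_lt hk', hchain k hk']
      · obtain rfl : k = K - 1 := by omega
        simp [hk', hlast, show K - 1 < K by omega]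

end Paths

section Circulation

variable {V R : Type*} [Fintype R] [DecidableEq V] (src tgt : R → V)

def IsCirculation (W : R → ℝ) : Prop :=
  ∀ x, ∑ e ∈ univ.filter (fun e => src e = x), W e =
    ∑ e ∈ univ.filter (fun e => tgt e = x), W e

variable {src tgt} {W : R → ℝ}

lemma IsCirculation.sum_filter_src_mem_eq (hW : IsCirculation src tgt W) (S : Finset V) :
    ∑ e ∈ univ.filter (fun e => src e ∈ S), W e =
      ∑ e ∈ univ.filter (fun e => tgt e ∈ S), W e := by
  rw [← sum_fiberwise_eq_sum_filter univ S src W, ← sum_fiberwise_eq_sum_filter univ S tgt W]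
  exact sum_congr rfl fun x _ => hW x

lemma IsCirculation.src_mem_of_tgt_mem (hW : IsCirculation src tgt W) (hW0 : ∀ e, 0 ≤ W e)
    {S : Finset V} (hS : ∀ e, 0 < W e → src e ∈ S → tgt e ∈ S) {r : R} (hr : 0 < W r)
    (ht : tgt r ∈ S) : src r ∈ S := by
  set d : R → ℝ := fun e => (if tgt e ∈ S then W e else 0) - (if src e ∈ S then W e else 0)
  have hd0 : ∀ e, 0 ≤ d e := by
    intro e
    rcases (hW0 e).eq_or_lt with h | h
    · simp [d, ← h]
    · by_cases hs : src e ∈ S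
      · simp [d, hs, hS e h hs]
      · simp only [d, hs, if_false, sub_zero]
        split_ifs <;> linarith
  have hsum : ∑ e, d e = 0 := by
    simp only [d, sum_sub_distrib, ← sum_filter, hW.sum_filter_src_mem_eq, sub_self]
  have hdr := (sum_eq_zero_iff_of_nonneg fun e _ => hd0 e).1 hsum r (mem_univ r)
  by_contra hs
  simp only [d, ht, hs, if_true, if_false, sub_zero] at hdr
  exact hr.ne' hdr

lemma IsCirculation.reflTransGen_tgt_src [Fintype V] (hW : IsCirculation src tgt W)
    (hW0 : ∀ e, 0 ≤ W e) {r : R} (hr : 0 < W r) :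
    ReflTransGen (EdgeAdj src tgt (0 < W ·)) (tgt r) (src r) := by
  classical
  simpa using hW.src_mem_of_tgt_mem hW0
    (S := univ.filter (ReflTransGen (EdgeAdj src tgt (0 < W ·)) (tgt r)))
    (fun e he hs => by simpa using (mem_filter.1 hs).2.tail ⟨e, he, rfl, rfl⟩) hr
    (mem_filter.2 ⟨mem_univ _, .refl⟩)

end Circulation

section Stationary

variable {V R : Type*} [Fintype R] [DecidableEq V] (src tgt : R → V)

def IsStationaryWeight (a : R → ℝ) (p : V → ℝ) : Prop :=
  ∀ x, p x * ∑ r ∈ univ.filter (fun r => src r = x), a r =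
    ∑ r ∈ univ.filter (fun r => tgt r = x), a r * p (src r)

variable {src tgt} {a : R → ℝ} {p : V → ℝ}

lemma IsStationaryWeight.const_mul (h : IsStationaryWeight src tgt a p) (c : ℝ) :
    IsStationaryWeight src tgt (fun r => c * a r) p := by
  intro x
  simp only [← mul_sum, mul_assoc]
  rw [mul_left_comm, h x]

lemma IsStationaryWeight.isCirculation (h : IsStationaryWeight src tgt a p) :
    IsCirculation src tgt (fun r => a r * p (src r)) := by
  intro x
  rw [← h x, mul_sum]
  refine sum_congr rfl fun r hr => ?_
  rw [← (mem_filter.1 hr).2, mul_comm]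

lemma IsStationaryWeight.of_tendsto {ι : Type*} {l : Filter ι} [l.NeBot] {a : ι → R → ℝ}
    {p : ι → V → ℝ} {a₀ : R → ℝ} {p₀ : V → ℝ}
    (ha : ∀ r, Tendsto (fun i => a i r) l (𝓝 (a₀ r)))
    (hp : ∀ x, Tendsto (fun i => p i x) l (𝓝 (p₀ x)))
    (h : ∀ᶠ i in l, IsStationaryWeight src tgt (a i) (p i)) :
    IsStationaryWeight src tgt a₀ p₀ := by
  intro x
  refine tendsto_nhds_unique ((hp x).mul (tendsto_finsetSum _ fun r _ => ha r)) ?_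
  refine (tendsto_finsetSum _ fun r _ => (ha r).mul (hp (src r))).congr' ?_
  filter_upwards [h] with i hi using (hi x).symm

end Stationary

lemma tendsto_zero_of_tendsto_div_self {f : ℝ → ℝ} {a : ℝ}
    (h : Tendsto (fun ε => f ε / ε) (𝓝[>] 0) (𝓝 a)) : Tendsto f (𝓝[>] 0) (𝓝 0) := by
  have hid : Tendsto (fun ε : ℝ => ε) (𝓝[>] 0) (𝓝 0) :=
    tendsto_nhdsWithin_of_tendsto_nhds tendsto_id
  refine (by simpa using h.mul hid : Tendsto (fun ε => f ε / ε * ε) _ _).congr' ?_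
  filter_upwards [self_mem_nhdsWithin] with ε hε using div_mul_cancel₀ _ (ne_of_gt hε)

lemma tendsto_mul_ite_div {R : Type*} [DecidableEq R] (Rslow : Finset R) (κ : R → ℝ) (r : R) :
    Tendsto (fun ε => ε * if r ∈ Rslow then κ r else κ r / ε) (𝓝[>] 0)
      (𝓝 (if r ∈ Rslow then 0 else κ r)) := by
  split_ifs
  · simpa using ((tendsto_nhdsWithin_of_tendsto_nhds tendsto_id :
      Tendsto (fun ε : ℝ => ε) (𝓝[>] 0) (𝓝 0)).mul_const (κ r))
  · refine tendsto_const_nhds.congr' ?_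
    filter_upwards [self_mem_nhdsWithin] with ε hε using (mul_div_cancel₀ _ (ne_of_gt hε)).symm

theorem fast_cycle_edges_form_cycles_general
    {V R : Type*} [Fintype V] [Fintype R] [DecidableEq V] [DecidableEq R]
    (src tgt : R → V)
    (Rslow Rfast : Finset R)
    (hRdisj : Disjoint Rslow Rfast) (hRunion : Rslow ∪ Rfast = Finset.univ)
    (κ : R → ℝ) (hκ : ∀ r, 0 < κ r)
    (πeps : ℝ → V → ℝ)
    (hstat : ∀ ε : ℝ, 0 < ε → ∀ x : V,
      πeps ε x * (∑ r ∈ Finset.univ.filter (fun r => src r = x),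
          (if r ∈ Rslow then κ r else κ r / ε))
        = ∑ r ∈ Finset.univ.filter (fun r => tgt r = x),
            (if r ∈ Rslow then κ r else κ r / ε) * πeps ε (src r))
    (V0 V1 : Finset V)
    (hVunion : V0 ∪ V1 = Finset.univ)
    (πlim πtilde : V → ℝ)
    (hV0 : ∀ x ∈ V0, 0 < πlim x ∧
      Tendsto (fun ε => πeps ε x) (nhdsWithin 0 (Set.Ioi 0)) (nhds (πlim x)))
    (hV1 : ∀ x ∈ V1, 0 < πtilde x ∧
      Tendsto (fun ε => πeps ε x / ε) (nhdsWithin 0 (Set.Ioi 0)) (nhds (πtilde x))) :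
    ∀ r : R, r ∈ Rfast → src r ∈ V0 →
      ∃ K : ℕ, 1 ≤ K ∧ ∃ c : ℕ → R,
        c 0 = r ∧
        (∀ k < K, c k ∈ Rfast ∧ src (c k) ∈ V0) ∧
        (∀ k, k + 1 < K → tgt (c k) = src (c (k + 1))) ∧
        tgt (c (K - 1)) = src r := by
  intro r hr hr0
  have hfast : ∀ e, e ∈ Rfast ↔ e ∉ Rslow := fun e => by
    rw [← mem_compl, (IsCompl.of_eq hRdisj.eq_bot hRunion).compl_eq]
  set plim : V → ℝ := fun x => if x ∈ V0 then πlim x else 0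
  have hπlim : ∀ x, Tendsto (fun ε => πeps ε x) (𝓝[>] 0) (𝓝 (plim x)) := by
    intro x
    by_cases hx : x ∈ V0
    · simpa [plim, hx] using (hV0 x hx).2
    · have hx1 : x ∈ V1 := by
        simpa [hx] using (show x ∈ V0 ∪ V1 from hVunion ▸ mem_univ x)
      simpa [plim, hx] using tendsto_zero_of_tendsto_div_self (hV1 x hx1).2
  set W : R → ℝ := fun e => (if e ∈ Rslow then 0 else κ e) * plim (src e)
  have hcirc : IsCirculation src tgt W :=
    (IsStationaryWeight.of_tendsto (tendsto_mul_ite_div Rslow κ) hπlim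
      (eventually_mem_nhdsWithin.mono fun ε hε =>
        IsStationaryWeight.const_mul (hstat ε hε) ε)).isCirculation
  have hW0 : ∀ e, 0 ≤ W e := fun e => by
    refine mul_nonneg (by split_ifs; exacts [le_rfl, (hκ e).le]) ?_
    dsimp only [plim]
    split_ifs with hs
    exacts [(hV0 _ hs).1.le, le_rfl]
  have hWpos : ∀ e, 0 < W e ↔ e ∈ Rfast ∧ src e ∈ V0 := fun e => by
    by_cases hs : src e ∈ V0
    · by_cases he : e ∈ Rslow <;> simp [W, plim, hs, he, hfast, hκ e, (hV0 _ hs).1]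
    · simp [W, plim, hs]
  have hrW : 0 < W r := (hWpos r).2 ⟨hr, hr0⟩
  obtain ⟨K, hK, c, hc0, hcW, hchain, hlast⟩ :=
    exists_edgePath_of_reflTransGen src tgt hrW (hcirc.reflTransGen_tgt_src hW0 hrW)
  exact ⟨K, hK, c, hc0, fun k hk => (hWpos _).1 (hcW k hk), hchain, hlast⟩

/-- Fast–slow network: the subgraph `(V₀, R_fcyc)` of fast edges emanating from `V₀`
consists purely of cycles: every `r ∈ R_fcyc := {r ∈ R_fast : r₋ ∈ V₀}` is the first
edge of a cycle `r¹, …, r^K ∈ R_fcyc` with `r^k₊ = r^{k+1}₋` and `r^K₊ = r¹₋`.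
Here `(V,R)` is a finite directed graph with edge partition `R = R_slow ⊔ R_fast`,
rates `κ > 0` scaled by `1/ε` on fast edges, and `π^ε` is the normalised stationary
distribution, with `π^ε_x → π_x > 0` on `V₀` and `π^ε_x/ε → π̃_x > 0` on `V₁`. -/
theorem fast_cycle_edges_form_cycles
    {V R : Type*} [Fintype V] [Fintype R] [DecidableEq V] [DecidableEq R]
    (src tgt : R → V)
    (Rslow Rfast : Finset R)
    (hRdisj : Disjoint Rslow Rfast) (hRunion : Rslow ∪ Rfast = Finset.univ)
    (κ : R → ℝ) (hκ : ∀ r, 0 < κ r)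
    (πeps : ℝ → V → ℝ)
    (hπpos : ∀ ε : ℝ, 0 < ε → ∀ x, 0 < πeps ε x)
    (hnorm : ∀ ε : ℝ, 0 < ε → ∑ x, πeps ε x = 1)
    (hstat : ∀ ε : ℝ, 0 < ε → ∀ x : V,
      πeps ε x * (∑ r ∈ Finset.univ.filter (fun r => src r = x),
          (if r ∈ Rslow then κ r else κ r / ε))
        = ∑ r ∈ Finset.univ.filter (fun r => tgt r = x),
            (if r ∈ Rslow then κ r else κ r / ε) * πeps ε (src r))
    (V0 V1 : Finset V)
    (hVdisj : Disjoint V0 V1) (hVunion : V0 ∪ V1 = Finset.univ)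
    (πlim πtilde : V → ℝ)
    (hV0 : ∀ x ∈ V0, 0 < πlim x ∧
      Tendsto (fun ε => πeps ε x) (nhdsWithin 0 (Set.Ioi 0)) (nhds (πlim x)))
    (hV1 : ∀ x ∈ V1, 0 < πtilde x ∧
      Tendsto (fun ε => πeps ε x / ε) (nhdsWithin 0 (Set.Ioi 0)) (nhds (πtilde x))) :
    ∀ r : R, r ∈ Rfast → src r ∈ V0 →
      ∃ K : ℕ, 1 ≤ K ∧ ∃ c : ℕ → R,
        c 0 = r ∧
        (∀ k < K, c k ∈ Rfast ∧ src (c k) ∈ V0) ∧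
        (∀ k, k + 1 < K → tgt (c k) = src (c (k + 1))) ∧
        tgt (c (K - 1)) = src r :=
  fast_cycle_edges_form_cycles_general src tgt Rslow Rfast hRdisj hRunion κ hκ πeps hstat V0 V1
    hVunion πlim πtilde hV0 hV1
end
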